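/- The two Borel subalgebras b₊ and b₋ of gl(n+1)⊕t_{n+1} are isotropic with respect to the pairing ⟨z^i, Z_j⟩ = δ^i_j, ⟨z^{ij}, Z_{kl}⟩ = δ^i_kδ^j_l (all other pairings zero), they intersect trivially, and b₊ + b₋ = gl(n+1)⊕t_{n+1} as vector spaces (so dim b₊ = dim b₋ = (n+1)(n+2)/2). -/

import Mathlib

/-!
On diagonal elements the pairing (trace form plus dot product on `t_{n+1}`) is
`⟨H_i + s I_i, H_j + t I_j⟩ = δ_ij (1 + s t)`; with `s, t = ±i` this yields `⟨z^i, Z_j⟩ = δ_ij`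
and `⟨Z_i, Z_j⟩ = ⟨z^i, z^j⟩ = 0`, while `E_ij` (`i ≠ j`) is orthogonal to all diagonal
elements and `tr(E_ij E_kl) = δ_jk δ_il` vanishes when `i < j`, `k < l`.
Since `Z_i` and `z^i` recover `H_i` and `I_i`, `b₊ + b₋` is the whole space, of dimension
`(n+1)(n+2)`; each of `b₊`, `b₋` is spanned by `(n+1)(n+2)/2` vectors, so the sum is direct
and both dimensions are exactly `(n+1)(n+2)/2`.
-/

/-- The algebra `gl(n+1) ⊕ t_{n+1}` (see STATEMENT 18). -/
abbrev glPlusT (n : ℕ) := Matrix (Fin (n+1)) (Fin (n+1)) ℂ × (Fin (n+1) → ℂ)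

/-- `H_i = E_{ii}`. -/
noncomputable def Hgen (n : ℕ) (i : Fin (n+1)) : glPlusT n :=
  (Matrix.single i i 1, 0)

/-- `F_{ij} = E_{ij}` (`i ≠ j`). -/
noncomputable def Fgen (n : ℕ) (i j : Fin (n+1)) : glPlusT n :=
  (Matrix.single i j 1, 0)

/-- The central generators `I_i` of the abelian algebra `t_{n+1}`. -/
noncomputable def Igen (n : ℕ) (i : Fin (n+1)) : glPlusT n :=
  (0, Pi.single i 1)

/-- `Z_i = (H_i + i I_i)/√2`. -/
noncomputable def Zgen (n : ℕ) (i : Fin (n+1)) : glPlusT n :=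
  ((Real.sqrt 2 : ℂ))⁻¹ • (Hgen n i + Complex.I • Igen n i)

/-- `z^i = (H_i − i I_i)/√2`. -/
noncomputable def zgen (n : ℕ) (i : Fin (n+1)) : glPlusT n :=
  ((Real.sqrt 2 : ℂ))⁻¹ • (Hgen n i - Complex.I • Igen n i)

/-- The set `b₊ = span{Z_i, Z_{ij} = F_{ij} (i<j)}`. -/
def BplusSet (n : ℕ) : Set (glPlusT n) :=
  Set.range (Zgen n) ∪ {x | ∃ i j : Fin (n+1), i < j ∧ x = Fgen n i j}

/-- The set `b₋ = span{z^i, z^{ij} = F_{ji} (i<j)}`. -/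
def BminusSet (n : ℕ) : Set (glPlusT n) :=
  Set.range (zgen n) ∪ {x | ∃ i j : Fin (n+1), i < j ∧ x = Fgen n j i}

/-- The invariant pairing on `gl(n+1) ⊕ t_{n+1}` realizing
`⟨z^i,Z_j⟩ = δ^i_j`, `⟨z^{ij},Z_{kl}⟩ = δ^i_kδ^j_l`, all other pairings of the
`b₋` and `b₊` basis elements being zero. -/
noncomputable def glPairing (n : ℕ) (x y : glPlusT n) : ℂ :=
  Matrix.trace (x.1 * y.1) + ∑ i, x.2 i * y.2 i

theorem glPairing_comm (n : ℕ) (x y : glPlusT n) : glPairing n x y = glPairing n y x := by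
  simp only [glPairing, Matrix.trace_mul_comm x.1, mul_comm (x.2 _)]

noncomputable def glPairingBilin (n : ℕ) : glPlusT n →ₗ[ℂ] glPlusT n →ₗ[ℂ] ℂ :=
  LinearMap.mk₂ ℂ (glPairing n)
    (fun x x' y => by simp only [glPairing, Prod.fst_add, Prod.snd_add,
      Matrix.trace_add, Pi.add_apply, add_mul, Finset.sum_add_distrib]; ring)
    (fun c x y => by simp only [glPairing, Prod.smul_fst, Prod.smul_snd, Matrix.smul_mul,
      Matrix.trace_smul, Pi.smul_apply, smul_eq_mul, mul_assoc, ← Finset.mul_sum, mul_add])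
    (fun x y y' => by simp only [glPairing, Prod.fst_add, Prod.snd_add,
      Matrix.trace_add, Pi.add_apply, mul_add, Finset.sum_add_distrib]; ring)
    (fun c x y => by simp only [glPairing, Prod.smul_fst, Prod.smul_snd, Matrix.mul_smul,
      Matrix.trace_smul, Pi.smul_apply, smul_eq_mul, mul_left_comm _ c, ← Finset.mul_sum,
      mul_add])

theorem glPairingBilin_apply (n : ℕ) (x y : glPlusT n) :
    glPairingBilin n x y = glPairing n x y := rfl

theorem glPairing_Fgen_Fgen (n : ℕ) (a b c d : Fin (n+1)) :
    glPairing n (Fgen n a b) (Fgen n c d) = if b = c ∧ a = d then 1 else 0 := by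
  simp [glPairing, Fgen, Matrix.trace_single_mul, Matrix.single_apply, eq_comm]

noncomputable def diagGen (n : ℕ) (s : ℂ) (i : Fin (n+1)) : glPlusT n :=
  Hgen n i + s • Igen n i

theorem glPairing_diagGen_diagGen (n : ℕ) (s t : ℂ) (i j : Fin (n+1)) :
    glPairing n (diagGen n s i) (diagGen n t j) = if i = j then 1 + s * t else 0 := by
  rcases eq_or_ne i j with rfl | hij
  · simp [glPairing, diagGen, Hgen, Igen, Pi.single_apply]
  · simp [glPairing, diagGen, Hgen, Igen, Pi.single_apply, hij, hij.symm]

theorem glPairing_diagGen_Fgen (n : ℕ) (s : ℂ) (i : Fin (n+1)) {k l : Fin (n+1)}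
    (hkl : k ≠ l) : glPairing n (diagGen n s i) (Fgen n k l) = 0 := by
  simp [glPairing, diagGen, Hgen, Igen, Fgen, Matrix.trace_single_mul, Matrix.single_apply]
  grind

theorem Zgen_eq_smul_diagGen (n : ℕ) (i : Fin (n+1)) :
    Zgen n i = ((Real.sqrt 2 : ℂ))⁻¹ • diagGen n Complex.I i := rfl

theorem zgen_eq_smul_diagGen (n : ℕ) (i : Fin (n+1)) :
    zgen n i = ((Real.sqrt 2 : ℂ))⁻¹ • diagGen n (-Complex.I) i := by
  rw [zgen, diagGen, neg_smul, ← sub_eq_add_neg]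

theorem glPairing_smul_diagGen_smul_diagGen (n : ℕ) (a b s t : ℂ) (i j : Fin (n+1)) :
    glPairing n (a • diagGen n s i) (b • diagGen n t j) =
      if i = j then a * b * (1 + s * t) else 0 := by
  rw [← glPairingBilin_apply, LinearMap.map_smul₂, map_smul, glPairingBilin_apply,
    glPairing_diagGen_diagGen]
  split_ifs <;> simp [mul_assoc]

theorem inv_sqrt_two_mul_self :
    ((Real.sqrt 2 : ℂ))⁻¹ * ((Real.sqrt 2 : ℂ))⁻¹ = 2⁻¹ := by
  rw [← mul_inv, ← Complex.ofReal_mul, Real.mul_self_sqrt zero_le_two, Complex.ofReal_ofNat]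

theorem glPairing_zgen_Zgen (n : ℕ) (i j : Fin (n+1)) :
    glPairing n (zgen n i) (Zgen n j) = if i = j then 1 else 0 := by
  rw [zgen_eq_smul_diagGen, Zgen_eq_smul_diagGen, glPairing_smul_diagGen_smul_diagGen,
    inv_sqrt_two_mul_self, neg_mul, Complex.I_mul_I]
  norm_num

theorem glPairing_Zgen_Zgen (n : ℕ) (i j : Fin (n+1)) :
    glPairing n (Zgen n i) (Zgen n j) = 0 := by
  simp [Zgen_eq_smul_diagGen, glPairing_smul_diagGen_smul_diagGen]

theorem glPairing_zgen_zgen (n : ℕ) (i j : Fin (n+1)) :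
    glPairing n (zgen n i) (zgen n j) = 0 := by
  simp [zgen_eq_smul_diagGen, glPairing_smul_diagGen_smul_diagGen]

theorem glPairing_smul_diagGen_Fgen (n : ℕ) (a s : ℂ) (i : Fin (n+1)) {k l : Fin (n+1)}
    (hkl : k ≠ l) : glPairing n (a • diagGen n s i) (Fgen n k l) = 0 := by
  rw [← glPairingBilin_apply, LinearMap.map_smul₂, glPairingBilin_apply,
    glPairing_diagGen_Fgen n s i hkl, smul_zero]

theorem glPairing_eq_zero_of_mem_span {n : ℕ} {S T : Set (glPlusT n)}
    (h : ∀ a ∈ S, ∀ b ∈ T, glPairing n a b = 0) {x y : glPlusT n}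
    (hx : x ∈ Submodule.span ℂ S) (hy : y ∈ Submodule.span ℂ T) : glPairing n x y = 0 :=
  (Submodule.mem_bot ℂ).1 <| LinearMap.BilinMap.apply_apply_mem_of_mem_span ⊥ S T
    (glPairingBilin n) (fun a ha b hb => (Submodule.mem_bot ℂ).2 (h a ha b hb)) x y hx hy

theorem glPairing_Zgen_Fgen (n : ℕ) (i : Fin (n+1)) {k l : Fin (n+1)} (hkl : k ≠ l) :
    glPairing n (Zgen n i) (Fgen n k l) = 0 :=
  glPairing_smul_diagGen_Fgen n _ _ i hkl

theorem glPairing_zgen_Fgen (n : ℕ) (i : Fin (n+1)) {k l : Fin (n+1)} (hkl : k ≠ l) :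
    glPairing n (zgen n i) (Fgen n k l) = 0 := by
  rw [zgen_eq_smul_diagGen, glPairing_smul_diagGen_Fgen n _ _ i hkl]

theorem glPairing_BplusSet (n : ℕ) :
    ∀ a ∈ BplusSet n, ∀ b ∈ BplusSet n, glPairing n a b = 0 := by
  rintro a (⟨i, rfl⟩ | ⟨i, j, hij, rfl⟩) b (⟨k, rfl⟩ | ⟨k, l, hkl, rfl⟩)
  · exact glPairing_Zgen_Zgen n i k
  · exact glPairing_Zgen_Fgen n i hkl.ne
  · rw [glPairing_comm]; exact glPairing_Zgen_Fgen n k hij.ne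
  · rw [glPairing_Fgen_Fgen, if_neg]
    rintro ⟨rfl, rfl⟩
    exact lt_asymm hij hkl

theorem glPairing_BminusSet (n : ℕ) :
    ∀ a ∈ BminusSet n, ∀ b ∈ BminusSet n, glPairing n a b = 0 := by
  rintro a (⟨i, rfl⟩ | ⟨i, j, hij, rfl⟩) b (⟨k, rfl⟩ | ⟨k, l, hkl, rfl⟩)
  · exact glPairing_zgen_zgen n i k
  · exact glPairing_zgen_Fgen n i hkl.ne'
  · rw [glPairing_comm]; exact glPairing_zgen_Fgen n k hij.ne'
  · rw [glPairing_Fgen_Fgen, if_neg]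
    rintro ⟨rfl, rfl⟩
    exact lt_asymm hij hkl

theorem Hgen_mem_and_Igen_mem_of_diagGen_mem {n : ℕ} {p : Submodule ℂ (glPlusT n)} {s t : ℂ}
    {i : Fin (n+1)} (hst : s ≠ t) (hs : diagGen n s i ∈ p) (ht : diagGen n t i ∈ p) :
    Hgen n i ∈ p ∧ Igen n i ∈ p := by
  have hI : Igen n i = (s - t)⁻¹ • (diagGen n s i - diagGen n t i) := by
    rw [diagGen, diagGen, add_sub_add_left_eq_sub, ← sub_smul, smul_smul,
      inv_mul_cancel₀ (sub_ne_zero.2 hst), one_smul]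
  have hI_mem : Igen n i ∈ p := hI ▸ p.smul_mem _ (p.sub_mem hs ht)
  have hH : Hgen n i = diagGen n s i - s • Igen n i := by rw [diagGen, add_sub_cancel_right]
  exact ⟨hH ▸ p.sub_mem hs (p.smul_mem s hI_mem), hI_mem⟩

theorem glPlusT_eq_sum (n : ℕ) (x : glPlusT n) :
    x = ∑ i, ∑ j, x.1 i j • Fgen n i j + ∑ i, x.2 i • Igen n i := by
  refine Prod.ext ?_ ?_
  · simp only [Prod.fst_add, Prod.fst_sum, Prod.smul_fst, Fgen, Igen, smul_zero,
      Finset.sum_const_zero, add_zero, Matrix.smul_single, smul_eq_mul, mul_one]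
    exact Matrix.matrix_eq_sum_single x.1
  · simp only [Prod.snd_add, Prod.snd_sum, Prod.smul_snd, Fgen, Igen, smul_zero,
      Finset.sum_const_zero, zero_add, ← Pi.single_smul, smul_eq_mul, mul_one]
    exact (Finset.univ_sum_single x.2).symm

theorem eq_top_of_Fgen_mem_of_Igen_mem {n : ℕ} {p : Submodule ℂ (glPlusT n)}
    (hF : ∀ i j, Fgen n i j ∈ p) (hI : ∀ i, Igen n i ∈ p) : p = ⊤ := by
  refine (Submodule.eq_top_iff' (p := p)).2 fun x => ?_
  rw [glPlusT_eq_sum n x]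
  exact p.add_mem (p.sum_mem fun i _ => p.sum_mem fun j _ => p.smul_mem _ (hF i j))
    (p.sum_mem fun i _ => p.smul_mem _ (hI i))

theorem span_BplusSet_sup_span_BminusSet (n : ℕ) :
    Submodule.span ℂ (BplusSet n) ⊔ Submodule.span ℂ (BminusSet n) = ⊤ := by
  rw [← Submodule.span_union]
  set p := Submodule.span ℂ (BplusSet n ∪ BminusSet n)
  have hc : ((Real.sqrt 2 : ℂ))⁻¹ ≠ 0 := by simp
  have hdiag (i : Fin (n+1)) : Hgen n i ∈ p ∧ Igen n i ∈ p := by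
    refine Hgen_mem_and_Igen_mem_of_diagGen_mem (s := Complex.I) (t := -Complex.I)
      (by simp [eq_neg_iff_add_eq_zero, Complex.I_ne_zero]) ?_ ?_
    · rw [← p.smul_mem_iff hc, ← Zgen_eq_smul_diagGen]
      exact Submodule.subset_span (Or.inl (Or.inl ⟨i, rfl⟩))
    · rw [← p.smul_mem_iff hc, ← zgen_eq_smul_diagGen]
      exact Submodule.subset_span (Or.inr (Or.inl ⟨i, rfl⟩))
  refine eq_top_of_Fgen_mem_of_Igen_mem (fun i j => ?_) fun i => (hdiag i).2
  rcases lt_trichotomy i j with h | rfl | h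
  · exact Submodule.subset_span (Or.inl (Or.inr ⟨i, j, h, rfl⟩))
  · exact (hdiag i).1
  · exact Submodule.subset_span (Or.inr (Or.inr ⟨j, i, h, rfl⟩))

theorem card_fin_pairs_fst_le_snd (m : ℕ) :
    Fintype.card {p : Fin m × Fin m // p.1 ≤ p.2} = m * (m + 1) / 2 := by
  rw [← Fintype.card_congr Sym2.sortEquiv, Sym2.card, Fintype.card_fin, Nat.choose_two_right,
    Nat.add_sub_cancel, mul_comm]

theorem finrank_span_range_union_strictUpper_le {R M : Type*} [Ring R] [StrongRankCondition R]
    [AddCommGroup M] [Module R M] (m : ℕ) (d : Fin m → M) (f : Fin m → Fin m → M) :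
    Module.finrank R (Submodule.span R (Set.range d ∪ {x | ∃ i j, i < j ∧ x = f i j}))
      ≤ m * (m + 1) / 2 := by
  classical
  let g : {p : Fin m × Fin m // p.1 ≤ p.2} → M :=
    fun p => if p.1.1 = p.1.2 then d p.1.1 else f p.1.1 p.1.2
  have hsub : Set.range d ∪ {x | ∃ i j, i < j ∧ x = f i j} ⊆ Set.range g := by
    rintro x (⟨i, rfl⟩ | ⟨i, j, hij, rfl⟩)
    · exact ⟨⟨(i, i), le_rfl⟩, if_pos rfl⟩
    · exact ⟨⟨(i, j), hij.le⟩, if_neg hij.ne⟩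
  have := Module.Finite.span_of_finite R (Set.finite_range g)
  calc _ ≤ Module.finrank R (Submodule.span R (Set.range g)) :=
        Submodule.finrank_mono (Submodule.span_mono hsub)
    _ ≤ Fintype.card {p : Fin m × Fin m // p.1 ≤ p.2} := finrank_range_le_card g
    _ = m * (m + 1) / 2 := card_fin_pairs_fst_le_snd m

theorem finrank_glPlusT (n : ℕ) :
    Module.finrank ℂ (glPlusT n) = 2 * ((n + 1) * (n + 2) / 2) := by
  rw [Nat.two_mul_div_two_of_even (Nat.even_mul_succ_self (n + 1)), Module.finrank_prod,
    Module.finrank_matrix, Module.finrank_pi, Module.finrank_self, Fintype.card_fin]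
  ring

theorem Submodule.inf_eq_bot_and_finrank_eq_of_sup_eq_top {K V : Type*} [DivisionRing K]
    [AddCommGroup V] [Module K V] [FiniteDimensional K V] {p q : Submodule K V} {d : ℕ}
    (hsup : p ⊔ q = ⊤) (hV : Module.finrank K V = 2 * d) (hp : Module.finrank K p ≤ d)
    (hq : Module.finrank K q ≤ d) :
    p ⊓ q = ⊥ ∧ Module.finrank K p = d ∧ Module.finrank K q = d := by
  have h := Submodule.finrank_sup_add_finrank_inf_eq p q
  rw [hsup, finrank_top, hV] at h
  exact ⟨Submodule.finrank_eq_zero.1 (by omega), by omega, by omega⟩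

/-- the Borel subalgebras `b₊` and `b₋` of `gl(n+1) ⊕ t_{n+1}`
are isotropic for the pairing (which is the stated dual pairing on the basis),
intersect trivially, and sum to the whole space; both have dimension
`(n+1)(n+2)/2`. -/
theorem gl_borel_isotropic_complementary (n : ℕ) :
    (∀ i j, glPairing n (zgen n i) (Zgen n j) = if i = j then 1 else 0)
    ∧ (∀ i j k l : Fin (n+1), i < j → k < l →
        glPairing n (Fgen n j i) (Fgen n k l) = if i = k ∧ j = l then 1 else 0)
    ∧ (∀ x ∈ Submodule.span ℂ (BplusSet n), ∀ y ∈ Submodule.span ℂ (BplusSet n),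
        glPairing n x y = 0)
    ∧ (∀ x ∈ Submodule.span ℂ (BminusSet n), ∀ y ∈ Submodule.span ℂ (BminusSet n),
        glPairing n x y = 0)
    ∧ Submodule.span ℂ (BplusSet n) ⊓ Submodule.span ℂ (BminusSet n) = ⊥
    ∧ Submodule.span ℂ (BplusSet n) ⊔ Submodule.span ℂ (BminusSet n) = ⊤
    ∧ Module.finrank ℂ (Submodule.span ℂ (BplusSet n)) = (n+1)*(n+2)/2
    ∧ Module.finrank ℂ (Submodule.span ℂ (BminusSet n)) = (n+1)*(n+2)/2 := by
  have hsup := span_BplusSet_sup_span_BminusSet n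
  obtain ⟨hinf, hplus, hminus⟩ := Submodule.inf_eq_bot_and_finrank_eq_of_sup_eq_top hsup
    (finrank_glPlusT n) (finrank_span_range_union_strictUpper_le (n + 1) (Zgen n) (Fgen n))
    (finrank_span_range_union_strictUpper_le (n + 1) (zgen n) fun i j => Fgen n j i)
  exact ⟨glPairing_zgen_Zgen n, fun i j k l _ _ => glPairing_Fgen_Fgen n j i k l,
    fun x hx y hy => glPairing_eq_zero_of_mem_span (glPairing_BplusSet n) hx hy,
    fun x hx y hy => glPairing_eq_zero_of_mem_span (glPairing_BminusSet n) hx hy,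
    hinf, hsup, hplus, hminus⟩
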